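/- Let n ≥ 3 be an odd integer and D_n the dihedral group of order 2n. Then the nilpotent graph of D_n has exactly n + 1 connected components: one component consisting of the n − 1 nontrivial rotations, and n isolated vertices given by the n reflections. -/

import Mathlib

def nilpotentizer (G : Type*) [Group G] : Set G :=
  {g | ∀ h : G, Group.IsNilpotent (Subgroup.closure ({g, h} : Set G))}

def nilpotentizerOf {G : Type*} [Group G] (x : G) : Set G :=
  {g | Group.IsNilpotent (Subgroup.closure ({g, x} : Set G))}

def nilpotentGraph (G : Type*) [Group G] :
    SimpleGraph {x : G // x ∉ nilpotentizer G} where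
  Adj a b := a ≠ b ∧ Group.IsNilpotent (Subgroup.closure ({(a : G), (b : G)} : Set G))
  symm := ⟨fun a b ⟨hne, h⟩ => ⟨fun e => hne e.symm, by rwa [Set.pair_comm]⟩⟩
  loopless := ⟨fun a ⟨h, _⟩ => h rfl⟩

noncomputable def hypercenter (G : Type*) [Group G] : Subgroup G := Subgroup.upperCentralSeries G (Nat.card G)

instance {G : Type*} [Group G] : (hypercenter G).Normal := by
  unfold hypercenter; infer_instance

/-! For odd `n`, an element of `D_n` commuting with a reflection and with a nontrivial rotation
is trivial (a rotation `r k` central there has `2k = 0`), so every subgroup containing both has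
trivial centre and is not nilpotent. Two distinct reflections generate such a subgroup, as their
product is a nontrivial rotation; hence reflections are isolated, while any two rotations commute
and are adjacent. The components are therefore one for the rotations and one per reflection. -/

open Subgroup DihedralGroup SimpleGraph

theorem Commute.isNilpotent_closure_pair {G : Type*} [Group G] {a b : G} (h : Commute a b) :
    Group.IsNilpotent (closure ({a, b} : Set G)) := by
  have : IsMulCommutative (closure ({a, b} : Set G)) := isMulCommutative_closure <| by
    rintro x (rfl | rfl) y (rfl | rfl) <;> first | rfl | exact h.eq | exact h.symm.eq
  exact ⟨1, upperCentralSeries_one_eq_top_iff.2 this⟩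

theorem one_mem_nilpotentizer (G : Type*) [Group G] : (1 : G) ∈ nilpotentizer G :=
  fun h => (Commute.one_left h).isNilpotent_closure_pair

theorem SimpleGraph.IsIsolated.reachable_iff {V : Type*} {G : SimpleGraph V} {u v : V}
    (hu : G.IsIsolated u) : G.Reachable u v ↔ u = v := by
  refine ⟨fun ⟨p⟩ => ?_, fun h => h ▸ Reachable.refl u⟩
  cases p with
  | nil => rfl
  | cons hadj _ => exact absurd hadj (hu _)

theorem SimpleGraph.card_connectedComponent_eq_of_reachable_iff {V α : Type*} {G : SimpleGraph V}
    (f : V → α) (hf : Function.Surjective f) (h : ∀ u v, G.Reachable u v ↔ f u = f v) :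
    Nat.card G.ConnectedComponent = Nat.card α := by
  refine Nat.card_eq_of_bijective (ConnectedComponent.lift f fun u v p _ => (h u v).1 p.reachable)
    ⟨fun c d => ?_, fun a => ?_⟩
  · induction c using ConnectedComponent.ind
    induction d using ConnectedComponent.ind
    exact fun hcd => ConnectedComponent.sound ((h _ _).2 hcd)
  · obtain ⟨v, rfl⟩ := hf a
    exact ⟨G.connectedComponentMk v, rfl⟩

namespace DihedralGroup

variable {n : ℕ}

theorem r_eq_one_iff {i : ZMod n} : r i = 1 ↔ i = 0 := by
  rw [one_def, r.injEq]

theorem eq_one_of_commute_sr_of_commute_r (hodd : Odd n) {i j : ZMod n} (hj : j ≠ 0)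
    {z : DihedralGroup n} (hs : Commute (sr i) z) (hr : Commute (r j) z) : z = 1 := by
  cases z with
  | r k =>
    have : i + k = i - k := sr.inj (by simpa [sr_mul_r, r_mul_sr] using hs.eq)
    rw [r_eq_one_iff, ← ZMod.add_self_eq_zero_iff_eq_zero hodd]
    linear_combination this
  | sr k =>
    have : k - j = k + j := sr.inj (by simpa [sr_mul_r, r_mul_sr] using hr.eq)
    exact absurd ((ZMod.add_self_eq_zero_iff_eq_zero hodd).1 (by linear_combination -this)) hj

theorem not_isNilpotent_of_sr_mem_of_r_mem (hodd : Odd n) {i j : ZMod n} (hj : j ≠ 0)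
    {H : Subgroup (DihedralGroup n)} (hs : sr i ∈ H) (hr : r j ∈ H) :
    ¬ Group.IsNilpotent H := by
  intro hH
  have : Nontrivial H := H.nontrivial_iff_exists_ne_one.2 ⟨r j, hr, mt r_eq_one_iff.1 hj⟩
  obtain ⟨⟨z, hz⟩, hz1⟩ := ne_bot_iff_exists_ne_one.1 (Group.IsNilpotent.center_ne_bot H)
  have hcomm (g : H) : Commute (g : DihedralGroup n) z := congrArg Subtype.val (hz.comm g).symm
  exact hz1 (Subtype.ext (Subtype.ext
    (eq_one_of_commute_sr_of_commute_r hodd hj (hcomm ⟨_, hs⟩) (hcomm ⟨_, hr⟩))))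

theorem not_isNilpotent_closure_sr_pair (hodd : Odd n) {i : ZMod n} {y : DihedralGroup n}
    (hy1 : y ≠ 1) (hyi : y ≠ sr i) : ¬ Group.IsNilpotent (closure ({sr i, y} : Set _)) := by
  have hs : sr i ∈ closure ({sr i, y} : Set _) := subset_closure (Set.mem_insert _ _)
  have hy : y ∈ closure ({sr i, y} : Set _) := subset_closure (Set.mem_insert_of_mem _ rfl)
  cases y with
  | r j => exact not_isNilpotent_of_sr_mem_of_r_mem hodd (mt r_eq_one_iff.2 hy1) hs hy
  | sr j =>
    have hr : r (j - i) ∈ closure ({sr i, sr j} : Set _) := sr_mul_sr i j ▸ mul_mem hs hy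
    have hji : j - i ≠ 0 := sub_ne_zero.2 fun h => hyi (h ▸ rfl)
    exact not_isNilpotent_of_sr_mem_of_r_mem hodd hji hs hr

theorem nilpotentizer_eq_singleton_one (hn : n ≠ 1) (hodd : Odd n) :
    nilpotentizer (DihedralGroup n) = {1} := by
  refine Set.eq_singleton_iff_unique_mem.2 ⟨one_mem_nilpotentizer _, fun x hx => ?_⟩
  by_contra hx1
  cases x with
  | r i =>
    exact not_isNilpotent_closure_sr_pair hodd hx1 (by simp) (Set.pair_comm _ _ ▸ hx (sr 0))
  | sr i =>
    have : Fact (1 < n) := ⟨by have := hodd.pos; omega⟩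
    exact not_isNilpotent_closure_sr_pair hodd (mt r_eq_one_iff.1 one_ne_zero) (by simp) (hx (r 1))

def reflectionIndex : DihedralGroup n → Option (ZMod n)
  | r _ => none
  | sr i => some i

theorem nilpotentGraph_isIsolated_of_eq_sr (hodd : Odd n)
    {x : {x : DihedralGroup n // x ∉ nilpotentizer (DihedralGroup n)}} {i : ZMod n}
    (hx : x.1 = sr i) : (nilpotentGraph (DihedralGroup n)).IsIsolated x := by
  rintro y ⟨hxy, hnil⟩
  rw [hx] at hnil
  refine not_isNilpotent_closure_sr_pair hodd ?_ ?_ hnil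
  · exact fun h => y.2 (h ▸ one_mem_nilpotentizer _)
  · exact fun h => hxy (Subtype.ext (hx.trans h.symm))

theorem nilpotentGraph_reachable_of_eq_r
    {x y : {x : DihedralGroup n // x ∉ nilpotentizer (DihedralGroup n)}} {i j : ZMod n}
    (hx : x.1 = r i) (hy : y.1 = r j) : (nilpotentGraph (DihedralGroup n)).Reachable x y := by
  by_cases hxy : x = y
  · exact hxy ▸ Reachable.refl _
  · refine Adj.reachable ⟨hxy, ?_⟩
    rw [hx, hy]
    exact Commute.isNilpotent_closure_pair (by simp only [Commute, SemiconjBy, r_mul_r, add_comm])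

theorem nilpotentGraph_reachable_iff (hodd : Odd n)
    (x y : {x : DihedralGroup n // x ∉ nilpotentizer (DihedralGroup n)}) :
    (nilpotentGraph (DihedralGroup n)).Reachable x y ↔
      reflectionIndex x.1 = reflectionIndex y.1 := by
  obtain ⟨x | i, hx⟩ := x <;> obtain ⟨y | j, hy⟩ := y
  · exact iff_of_true (nilpotentGraph_reachable_of_eq_r rfl rfl) rfl
  · rw [reachable_comm, (nilpotentGraph_isIsolated_of_eq_sr hodd rfl).reachable_iff]
    simp [reflectionIndex]
  all_goals
    rw [(nilpotentGraph_isIsolated_of_eq_sr hodd rfl).reachable_iff]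
    simp [reflectionIndex]

end DihedralGroup

theorem nilpotentGraph_dihedral_odd (n : ℕ) (hn : 3 ≤ n) (hodd : Odd n) :
    Nat.card ((nilpotentGraph (DihedralGroup n)).ConnectedComponent) = n + 1 ∧
    (∀ x : {x : DihedralGroup n // x ∉ nilpotentizer (DihedralGroup n)},
      (∃ i : ZMod n, (x : DihedralGroup n) = DihedralGroup.sr i) →
        (nilpotentGraph (DihedralGroup n)).neighborSet x = ∅) ∧
    (∀ x y : {x : DihedralGroup n // x ∉ nilpotentizer (DihedralGroup n)},
      (∃ i : ZMod n, (x : DihedralGroup n) = DihedralGroup.r i) →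
        (∃ j : ZMod n, (y : DihedralGroup n) = DihedralGroup.r j) →
          (nilpotentGraph (DihedralGroup n)).Reachable x y) := by
  refine ⟨?_,
    fun x ⟨i, hx⟩ => (nilpotentGraph_isIsolated_of_eq_sr hodd hx).neighborSet_eq_empty,
    fun x y ⟨i, hx⟩ ⟨j, hy⟩ => nilpotentGraph_reachable_of_eq_r hx hy⟩
  have : NeZero n := ⟨hodd.pos.ne'⟩
  have hV (x : DihedralGroup n) : x ∉ nilpotentizer (DihedralGroup n) ↔ x ≠ 1 := by
    rw [nilpotentizer_eq_singleton_one (by omega) hodd, Set.mem_singleton_iff]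
  have hsurj : Function.Surjective fun x : {x : DihedralGroup n // x ∉ nilpotentizer _} =>
      reflectionIndex x.1 := by
    rintro (_ | i)
    · have : Fact (1 < n) := ⟨by omega⟩
      exact ⟨⟨r 1, (hV _).2 (mt r_eq_one_iff.1 one_ne_zero)⟩, rfl⟩
    · exact ⟨⟨sr i, (hV _).2 (by rw [one_def]; nofun)⟩, rfl⟩
  rw [card_connectedComponent_eq_of_reachable_iff _ hsurj (nilpotentGraph_reachable_iff hodd),
    Finite.card_option, Nat.card_zmod]
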